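/- For λ = (e^{iΘ₁},…,e^{iΘ_m}) ∈ T^m, define u₊(t) = √(t²+1)·e^{−t·arctan t}·(cos((Θ₁+…+Θ_m)/2), sin((Θ₁+…+Θ_m)/2)) for t ≥ 0. Then u₊ satisfies the ODE Ju′(t) + (arctan t)·J·S_{Θ₁+…+Θ_m}·u(t) = 0 for t ≥ 0 and u₊(t) → 0 as t → +∞. -/

import Mathlib

/-!
`u₊ = φ • v` with `φ(t) = √(t²+1) e^{-t arctan t}` and `v = (cos(Θ/2), sin(Θ/2))`. Since
`φ' = -arctan · φ`, the derivative is `-arctan t • u₊ t`, and since `S_Θ v = v`, the term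
`arctan t • J S_Θ u₊` is `arctan t • J u₊`, which cancels it. Decay holds because
`arctan t ≥ 1` eventually, so `φ(t) ≤ (t+1) e^{-t}`.
-/

open Real Matrix Filter

lemma hasDerivAt_sqrt_sq_add_one (t : ℝ) :
    HasDerivAt (fun t : ℝ => √(t ^ 2 + 1)) (t / √(t ^ 2 + 1)) t := by
  convert ((hasDerivAt_pow 2 t).add_const 1).sqrt (by positivity) using 1
  field_simp
  ring

lemma hasDerivAt_sqrt_mul_exp_neg_mul_arctan (t : ℝ) :
    HasDerivAt (fun t : ℝ => √(t ^ 2 + 1) * exp (-t * arctan t))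
      (-arctan t * (√(t ^ 2 + 1) * exp (-t * arctan t))) t := by
  have hsq : √(t ^ 2 + 1) ^ 2 = t ^ 2 + 1 := sq_sqrt (by positivity)
  have hexp : HasDerivAt (fun t : ℝ => exp (-t * arctan t))
      (exp (-t * arctan t) * (-1 * arctan t + -t * (1 / (1 + t ^ 2)))) t :=
    (((hasDerivAt_id t).neg).mul (hasDerivAt_arctan t)).exp
  refine ((hasDerivAt_sqrt_sq_add_one t).mul hexp).congr_deriv ?_
  field_simp
  linear_combination -t * hsq

lemma tendsto_sqrt_mul_exp_neg_mul_arctan_atTop :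
    Tendsto (fun t : ℝ => √(t ^ 2 + 1) * exp (-t * arctan t)) atTop (nhds 0) := by
  have hbound : Tendsto (fun t : ℝ => t ^ 1 * exp (-t) + exp (-t)) atTop (nhds 0) := by
    simpa using (tendsto_pow_mul_exp_neg_atTop_nhds_zero 1).add tendsto_exp_neg_atTop_nhds_zero
  have harctan : ∀ᶠ t in atTop, 1 ≤ arctan t :=
    (tendsto_nhds_of_tendsto_nhdsWithin tendsto_arctan_atTop).eventually_const_le
      (by linarith [pi_gt_three])
  refine squeeze_zero' (Eventually.of_forall fun t => by positivity) ?_ hbound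
  filter_upwards [harctan, eventually_ge_atTop 0] with t h1 ht
  have hsqrt : √(t ^ 2 + 1) ≤ t + 1 := sqrt_le_iff.2 ⟨by linarith, by nlinarith⟩
  have hexp : exp (-t * arctan t) ≤ exp (-t) := exp_le_exp.2 (by nlinarith)
  calc √(t ^ 2 + 1) * exp (-t * arctan t) ≤ (t + 1) * exp (-t) :=
        mul_le_mul hsqrt hexp (exp_pos _).le (by linarith)
    _ = t ^ 1 * exp (-t) + exp (-t) := by ring

lemma reflection_mulVec_half_angle (Θ : ℝ) :
    !![cos Θ, sin Θ; sin Θ, -cos Θ] *ᵥ ![cos (Θ / 2), sin (Θ / 2)] =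
      ![cos (Θ / 2), sin (Θ / 2)] := by
  have hcos : cos Θ * cos (Θ / 2) + sin Θ * sin (Θ / 2) = cos (Θ / 2) := by
    rw [← cos_sub]; ring_nf
  have hsin : sin Θ * cos (Θ / 2) + -(cos Θ * sin (Θ / 2)) = sin (Θ / 2) := by
    rw [← sub_eq_add_neg, ← sin_sub]; ring_nf
  ext i
  fin_cases i <;> simp [mulVec, dotProduct, Fin.sum_univ_two, hcos, hsin]

lemma mulVec_neg_smul_add_smul_mul_mulVec_of_mulVec_eq {n : Type*} [Fintype n]
    (J S : Matrix n n ℝ) {u : n → ℝ} (hu : S *ᵥ u = u) (a : ℝ) :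
    J *ᵥ (-a • u) + (a • (J * S)) *ᵥ u = 0 := by
  rw [smul_mulVec, ← mulVec_mulVec, hu, mulVec_smul, neg_smul, neg_add_cancel]

/-- For `Θ = Θ₁ + … + Θ_m`, the function
`u₊(t) = √(t²+1) e^{-t arctan t} (cos(Θ/2), sin(Θ/2))` satisfies the Hamiltonian
system `J u′(t) + (arctan t)·J·S_Θ·u(t) = 0` for `t ≥ 0` and tends to `0` as
`t → +∞`. -/
theorem u_plus_solves_and_decays (m : ℕ) (Θs : Fin m → ℝ) :
    let Θ : ℝ := ∑ i, Θs i
    let J : Matrix (Fin 2) (Fin 2) ℝ := !![0, -1; 1, 0]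
    let S : Matrix (Fin 2) (Fin 2) ℝ := !![cos Θ, sin Θ; sin Θ, -cos Θ]
    let u : ℝ → Fin 2 → ℝ := fun t =>
      (Real.sqrt (t ^ 2 + 1) * Real.exp (-t * arctan t)) • ![cos (Θ / 2), sin (Θ / 2)]
    (∀ t : ℝ, 0 ≤ t →
        HasDerivAt u ((-arctan t) • u t) t ∧
        J *ᵥ ((-arctan t) • u t) + (arctan t • (J * S)) *ᵥ u t = 0) ∧
      Tendsto u atTop (nhds 0) := by
  intro Θ J S u
  refine ⟨fun t _ => ⟨?_, ?_⟩, ?_⟩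
  · rw [smul_smul]
    exact (hasDerivAt_sqrt_mul_exp_neg_mul_arctan t).smul_const _
  · refine mulVec_neg_smul_add_smul_mul_mulVec_of_mulVec_eq J S ?_ _
    rw [mulVec_smul, reflection_mulVec_half_angle]
  · simpa only [zero_smul] using tendsto_sqrt_mul_exp_neg_mul_arctan_atTop.smul_const
      (![cos (Θ / 2), sin (Θ / 2)] : Fin 2 → ℝ)
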